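/- Let R₁, R₂, R₃, β > 0. Let m be a Borel probability measure on ℝ^d supported in B̄(R₁), let ν be a Borel probability measure on parameter space supported in 𝔖(R₂), and let a ∈ B̄(R₃). Then the map x ↦ ⟨a, Γ(x, m, ν)⟩ is differentiable on ℝ^d and its gradient satisfies ‖∇_x ⟨a, Γ(x, m, ν)⟩‖ ≤ 2 β R₁² R₂⁴ R₃ for every x ∈ ℝ^d. -/

import Mathlib

open MeasureTheory
open scoped RealInnerProductSpace

/-- The normalisation constant `γ₂(z, μ) = ∫ exp⟨z,y⟩ dμ(y)`. -/
noncomputable def gamma2 {d : ℕ} (z : EuclideanSpace ℝ (Fin d))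
    (μ : Measure (EuclideanSpace ℝ (Fin d))) : ℝ :=
  ∫ y, Real.exp ⟪z, y⟫ ∂μ

/-- The attention map `γ(z, μ) = (∫ exp⟨z,y⟩ • y dμ(y)) / γ₂(z, μ)`. -/
noncomputable def gammaAttn {d : ℕ} (z : EuclideanSpace ℝ (Fin d))
    (μ : Measure (EuclideanSpace ℝ (Fin d))) : EuclideanSpace ℝ (Fin d) :=
  (gamma2 z μ)⁻¹ • ∫ y, Real.exp ⟪z, y⟫ • y ∂μ

open Matrix


/-- Matrices carry the product (Borel) measurable structure. -/
noncomputable instance matrixMeasurableSpace {k d : ℕ} :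
    MeasurableSpace (Matrix (Fin k) (Fin d) ℝ) :=
  (inferInstance : MeasurableSpace (Fin k → Fin d → ℝ))

/-- A transformer parameter `θ = (θ_Q, θ_K, θ_V, θ_O)`, four `k × d` real matrices. -/
abbrev Param (k d : ℕ) : Type :=
  Matrix (Fin k) (Fin d) ℝ × Matrix (Fin k) (Fin d) ℝ ×
    Matrix (Fin k) (Fin d) ℝ × Matrix (Fin k) (Fin d) ℝ

/-- Frobenius norm of a matrix. -/
noncomputable def frobNorm {k d : ℕ} (A : Matrix (Fin k) (Fin d) ℝ) : ℝ :=
  Real.sqrt (∑ i, ∑ j, (A i j) ^ 2)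

/-- `𝔖(R)`: the set of parameters each of whose four blocks has Frobenius norm at most `R`. -/
def paramBall (k d : ℕ) (R : ℝ) : Set (Param k d) :=
  {θ | frobNorm θ.1 ≤ R ∧ frobNorm θ.2.1 ≤ R ∧ frobNorm θ.2.2.1 ≤ R ∧ frobNorm θ.2.2.2 ≤ R}

/-- A single attention head: `θ_Oᵀ θ_V γ(β θ_Kᵀ θ_Q x, m)`. -/
noncomputable def attnHead {k d : ℕ} (β : ℝ) (x : EuclideanSpace ℝ (Fin d))
    (m : MeasureTheory.Measure (EuclideanSpace ℝ (Fin d))) (θ : Param k d) :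
    EuclideanSpace ℝ (Fin d) :=
  Matrix.toEuclideanLin (θ.2.2.2ᵀ * θ.2.2.1)
    (gammaAttn (β • Matrix.toEuclideanLin (θ.2.1ᵀ * θ.1) x) m)

/-- The multi-head attention velocity field `Γ(x, m, ν) = ∫ θ_Oᵀ θ_V γ(β θ_Kᵀ θ_Q x, m) dν(θ)`. -/
noncomputable def attnGamma {k d : ℕ} (β : ℝ) (x : EuclideanSpace ℝ (Fin d))
    (m : MeasureTheory.Measure (EuclideanSpace ℝ (Fin d)))
    (ν : MeasureTheory.Measure (Param k d)) : EuclideanSpace ℝ (Fin d) :=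
  ∫ θ, attnHead β x m θ ∂ν

/-! The derivative of `γ(·, m)` at `z` is `N⁻¹ DV - N⁻² DN ⊗ V`, where `N = γ₂(z, m)`,
`V = ∫ e^{⟨z,y⟩} y dm` and `DN`, `DV` are obtained by differentiating under the integral sign.
Since `m` lives in `B̄(R₁)`, the `e^{⟨z,y⟩}`-weighted integrals satisfy `‖DV‖ ≤ N R₁²`,
`‖DN‖ ≤ N R₁` and `‖V‖ ≤ N R₁`, so `‖Dγ‖ ≤ 2 R₁²`. A head `w ↦ θ_Oᵀθ_V γ(β θ_Kᵀθ_Q w, m)`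
composes `γ` with two matrices whose operator norms are bounded by Frobenius norms, hence by
`R₂²`; its derivative is therefore bounded by `2 β R₁² R₂⁴` uniformly in `w` and in
`θ ∈ 𝔖(R₂)`. This uniform bound lets us differentiate `Γ` under the `ν`-integral, and pairing
with `a` costs a factor `R₃`. -/

open Real Metric

lemma ae_mem_of_measure_eq_one {α : Type*} [MeasurableSpace α] {μ : Measure α}
    [IsProbabilityMeasure μ] {s : Set α} (hs : MeasurableSet s) (h : μ s = 1) : ∀ᵐ x ∂μ, x ∈ s :=
  (ae_mem_iff_measure_eq hs.nullMeasurableSet).2 (by rw [h, measure_univ])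

section ExpIntegral

variable {E G : Type*} [NormedAddCommGroup E] [InnerProductSpace ℝ E] [NormedAddCommGroup G]
  [NormedSpace ℝ G] {R : ℝ}

lemma norm_exp_inner_smul_le {z y : E} {c : G} {r C : ℝ} (hz : ‖z‖ ≤ r) (hy : ‖y‖ ≤ R)
    (hc : ‖c‖ ≤ C) : ‖exp ⟪z, y⟫ • c‖ ≤ exp (r * R) * C := by
  have hexp : exp ⟪z, y⟫ ≤ exp (r * R) := exp_le_exp.2 <|
    (real_inner_le_norm z y).trans (mul_le_mul hz hy (norm_nonneg y) ((norm_nonneg z).trans hz))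
  rw [norm_smul, norm_of_nonneg (exp_pos _).le]
  exact mul_le_mul hexp hc (norm_nonneg c) (exp_pos _).le

lemma hasFDerivAt_exp_inner_smul (y : E) (c : G) (z : E) :
    HasFDerivAt (fun w => exp ⟪w, y⟫ • c) (exp ⟪z, y⟫ • (innerSL ℝ y).smulRight c) z := by
  have h : HasFDerivAt (fun w : E => ⟪w, y⟫) (innerSL ℝ y) z :=
    (innerSL ℝ y).hasFDerivAt.congr_of_eventuallyEq (.of_forall fun w => real_inner_comm y w)
  convert h.exp.smul_const c using 1
  ext
  simp [smul_smul, mul_comm]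

variable [MeasurableSpace E] [BorelSpace E] [SecondCountableTopology E] {m : Measure E}
  [IsFiniteMeasure m]

lemma integrable_exp_inner_smul (hm : ∀ᵐ y ∂m, ‖y‖ ≤ R) {c : E → G} (hc : Continuous c)
    {C : ℝ} (hC : ∀ᵐ y ∂m, ‖c y‖ ≤ C) (z : E) :
    Integrable (fun y => exp ⟪z, y⟫ • c y) m :=
  .of_bound (by fun_prop : Continuous fun y => exp ⟪z, y⟫ • c y).aestronglyMeasurable
    (exp (‖z‖ * R) * C)
    (by filter_upwards [hm, hC] with y hy hcy using norm_exp_inner_smul_le le_rfl hy hcy)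

lemma integrable_exp_inner (hm : ∀ᵐ y ∂m, ‖y‖ ≤ R) (z : E) :
    Integrable (fun y => exp ⟪z, y⟫) m := by
  simpa using integrable_exp_inner_smul hm (c := fun _ => (1 : ℝ)) continuous_const
    (C := 1) (by simp) z

lemma norm_integral_exp_inner_smul_le (hm : ∀ᵐ y ∂m, ‖y‖ ≤ R) {c : E → G} {C : ℝ}
    (hC : ∀ᵐ y ∂m, ‖c y‖ ≤ C) (z : E) :
    ‖∫ y, exp ⟪z, y⟫ • c y ∂m‖ ≤ (∫ y, exp ⟪z, y⟫ ∂m) * C := by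
  rw [← integral_mul_const]
  refine norm_integral_le_of_norm_le ((integrable_exp_inner hm z).mul_const C) ?_
  filter_upwards [hC] with y hy
  rw [norm_smul, norm_of_nonneg (exp_pos _).le]
  exact mul_le_mul_of_nonneg_left hy (exp_pos _).le

lemma hasFDerivAt_integral_exp_inner_smul (hm : ∀ᵐ y ∂m, ‖y‖ ≤ R) {c : E → G}
    (hc : Continuous c) {C : ℝ} (hC : ∀ᵐ y ∂m, ‖c y‖ ≤ C) (z : E) :
    HasFDerivAt (fun w => ∫ y, exp ⟪w, y⟫ • c y ∂m)
      (∫ y, exp ⟪z, y⟫ • (innerSL ℝ y).smulRight (c y) ∂m) z := by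
  refine hasFDerivAt_integral_of_dominated_of_fderiv_le (ball_mem_nhds z one_pos)
    (F' := fun w y => exp ⟪w, y⟫ • (innerSL ℝ y).smulRight (c y))
    (bound := fun _ => exp ((‖z‖ + 1) * R) * (R * C))
    (.of_forall fun w => (integrable_exp_inner_smul hm hc hC w).aestronglyMeasurable)
    (integrable_exp_inner_smul hm hc hC z) ?_ ?_ (integrable_const _)
    (.of_forall fun y w _ => hasFDerivAt_exp_inner_smul y (c y) w)
  · exact (by fun_prop : Continuous fun y =>
      exp ⟪z, y⟫ • (innerSL ℝ y).smulRight (c y)).aestronglyMeasurable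
  · filter_upwards [hm, hC] with y hy hcy w hw
    refine norm_exp_inner_smul_le (c := (innerSL ℝ y).smulRight (c y)) ?_ hy ?_
    · linarith [norm_le_norm_add_norm_sub' w z, mem_ball_iff_norm.1 hw]
    · rw [ContinuousLinearMap.norm_smulRight_apply, innerSL_apply_norm]
      exact mul_le_mul hy hcy (norm_nonneg _) ((norm_nonneg y).trans hy)

end ExpIntegral

section Softmax

variable {d : ℕ} {m : Measure (EuclideanSpace ℝ (Fin d))} [IsProbabilityMeasure m] {R : ℝ}

lemma gamma2_pos (hm : ∀ᵐ y ∂m, ‖y‖ ≤ R) (z : EuclideanSpace ℝ (Fin d)) : 0 < gamma2 z m :=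
  integral_exp_pos (integrable_exp_inner hm z)

lemma norm_gammaAttn_le (hm : ∀ᵐ y ∂m, ‖y‖ ≤ R) (z : EuclideanSpace ℝ (Fin d)) :
    ‖gammaAttn z m‖ ≤ R := by
  have hN := gamma2_pos hm z
  rw [gammaAttn, norm_smul, norm_inv, norm_of_nonneg hN.le, inv_mul_le_iff₀ hN]
  exact norm_integral_exp_inner_smul_le hm hm z

lemma exists_hasFDerivAt_gammaAttn (hm : ∀ᵐ y ∂m, ‖y‖ ≤ R) (z : EuclideanSpace ℝ (Fin d)) :
    ∃ D : EuclideanSpace ℝ (Fin d) →L[ℝ] EuclideanSpace ℝ (Fin d),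
      HasFDerivAt (fun z => gammaAttn z m) D z ∧ ‖D‖ ≤ 2 * R ^ 2 := by
  obtain ⟨y₀, hy₀⟩ := hm.exists
  have hR : 0 ≤ R := (norm_nonneg y₀).trans hy₀
  set N := gamma2 z m
  have hN : 0 < N := gamma2_pos hm z
  have hNd : HasFDerivAt (fun w => gamma2 w m)
      (∫ y, exp ⟪z, y⟫ • (innerSL ℝ y).smulRight (1 : ℝ) ∂m) z := by
    simpa only [gamma2, smul_eq_mul, mul_one] using hasFDerivAt_integral_exp_inner_smul hm
      (c := fun _ => (1 : ℝ)) continuous_const (C := 1) (by simp) z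
  have hVd := hasFDerivAt_integral_exp_inner_smul hm continuous_id' hm z
  refine ⟨_, ((hasDerivAt_inv hN.ne').comp_hasFDerivAt z hNd).smul hVd, ?_⟩
  have hDN : ‖∫ y, exp ⟪z, y⟫ • (innerSL ℝ y).smulRight (1 : ℝ) ∂m‖ ≤ N * R := by
    refine norm_integral_exp_inner_smul_le hm ?_ z
    filter_upwards [hm] with y hy
    simpa [ContinuousLinearMap.norm_smulRight_apply] using hy
  have hDV : ‖∫ y, exp ⟪z, y⟫ • (innerSL ℝ y).smulRight y ∂m‖ ≤ N * (R * R) := by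
    refine norm_integral_exp_inner_smul_le hm ?_ z
    filter_upwards [hm] with y hy
    rw [ContinuousLinearMap.norm_smulRight_apply, innerSL_apply_norm]
    exact mul_self_le_mul_self (norm_nonneg y) hy
  have hV : ‖∫ y, exp ⟪z, y⟫ • y ∂m‖ ≤ N * R := norm_integral_exp_inner_smul_le hm hm z
  calc _ ≤ N⁻¹ * (N * (R * R)) + (N ^ 2)⁻¹ * (N * R) * (N * R) := by
        refine (norm_add_le _ _).trans (add_le_add ?_ ?_)
        · rw [Function.comp_apply, norm_smul, norm_inv, norm_of_nonneg hN.le]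
          exact mul_le_mul_of_nonneg_left hDV (inv_nonneg.2 hN.le)
        · rw [ContinuousLinearMap.norm_smulRight_apply, norm_smul, norm_neg, norm_inv,
            norm_of_nonneg (by positivity)]
          gcongr
    _ = 2 * R ^ 2 := by field_simp; ring

lemma differentiable_gammaAttn (hm : ∀ᵐ y ∂m, ‖y‖ ≤ R) :
    Differentiable ℝ fun z : EuclideanSpace ℝ (Fin d) => gammaAttn z m := fun z =>
  let ⟨_, hD, _⟩ := exists_hasFDerivAt_gammaAttn hm z
  hD.differentiableAt

lemma norm_fderiv_gammaAttn_le (hm : ∀ᵐ y ∂m, ‖y‖ ≤ R) (z : EuclideanSpace ℝ (Fin d)) :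
    ‖fderiv ℝ (fun z => gammaAttn z m) z‖ ≤ 2 * R ^ 2 :=
  let ⟨_, hD, hDR⟩ := exists_hasFDerivAt_gammaAttn hm z
  hD.fderiv ▸ hDR

end Softmax

section Frobenius

open scoped Matrix.Norms.Frobenius

variable {p q r : ℕ}

lemma frobNorm_eq_norm (M : Matrix (Fin p) (Fin q) ℝ) : frobNorm M = ‖M‖ := by
  simp [frobNorm, frobenius_norm_def, Real.sqrt_eq_rpow]

lemma frobNorm_nonneg (M : Matrix (Fin p) (Fin q) ℝ) : 0 ≤ frobNorm M :=
  Real.sqrt_nonneg _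

@[fun_prop]
lemma continuous_frobNorm : Continuous (frobNorm : Matrix (Fin p) (Fin q) ℝ → ℝ) := by
  unfold frobNorm; fun_prop

lemma frobNorm_mul_le (A : Matrix (Fin p) (Fin q) ℝ) (B : Matrix (Fin q) (Fin r) ℝ) :
    frobNorm (A * B) ≤ frobNorm A * frobNorm B := by
  simpa only [frobNorm_eq_norm] using frobenius_norm_mul A B

lemma frobNorm_transpose (M : Matrix (Fin p) (Fin q) ℝ) : frobNorm Mᵀ = frobNorm M := by
  simp [frobNorm_eq_norm]

lemma norm_toEuclideanLin_le (M : Matrix (Fin p) (Fin q) ℝ) (v : EuclideanSpace ℝ (Fin q)) :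
    ‖toEuclideanLin M v‖ ≤ frobNorm M * ‖v‖ := by
  rw [frobNorm_eq_norm]
  calc ‖toEuclideanLin M v‖ = ‖M * replicateCol (Fin 1) (WithLp.ofLp v)‖ := by
        rw [← replicateCol_mulVec]; exact (frobenius_norm_replicateCol _).symm
    _ ≤ ‖M‖ * ‖replicateCol (Fin 1) (WithLp.ofLp v)‖ := frobenius_norm_mul _ _
    _ = ‖M‖ * ‖v‖ := congrArg _ (frobenius_norm_replicateCol _)

lemma norm_toEuclideanCLM_le (M : Matrix (Fin p) (Fin p) ℝ) :
    ‖toEuclideanCLM (𝕜 := ℝ) M‖ ≤ frobNorm M :=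
  ContinuousLinearMap.opNorm_le_bound _ (frobNorm_nonneg M) (norm_toEuclideanLin_le M)

end Frobenius

lemma norm_toEuclideanCLM_transpose_mul_le {k d : ℕ} {R : ℝ} {X Y : Matrix (Fin k) (Fin d) ℝ}
    (hX : frobNorm X ≤ R) (hY : frobNorm Y ≤ R) : ‖toEuclideanCLM (𝕜 := ℝ) (Xᵀ * Y)‖ ≤ R ^ 2 :=
  calc _ ≤ frobNorm Xᵀ * frobNorm Y := (norm_toEuclideanCLM_le _).trans (frobNorm_mul_le _ _)
    _ ≤ R ^ 2 := by
      rw [frobNorm_transpose, sq]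
      exact mul_le_mul hX hY (frobNorm_nonneg Y) ((frobNorm_nonneg X).trans hX)

@[fun_prop]
lemma Continuous.toEuclideanLin_apply {X : Type*} [TopologicalSpace X] {p q : ℕ}
    {f : X → Matrix (Fin p) (Fin q) ℝ} {g : X → EuclideanSpace ℝ (Fin q)} (hf : Continuous f)
    (hg : Continuous g) : Continuous fun x => toEuclideanLin (f x) (g x) :=
  (PiLp.continuous_toLp 2 _).comp (hf.matrix_mulVec ((PiLp.continuous_ofLp 2 _).comp hg))

instance {p q : ℕ} : BorelSpace (Matrix (Fin p) (Fin q) ℝ) :=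
  inferInstanceAs (BorelSpace (Fin p → Fin q → ℝ))

instance {p q : ℕ} : SecondCountableTopology (Matrix (Fin p) (Fin q) ℝ) :=
  inferInstanceAs (SecondCountableTopology (Fin p → Fin q → ℝ))

lemma isClosed_paramBall (k d : ℕ) (R : ℝ) : IsClosed (paramBall k d R) := by
  simp only [paramBall, Set.ofPred_and]
  refine .inter ?_ (.inter ?_ (.inter ?_ ?_)) <;> exact isClosed_le (by fun_prop) continuous_const

section AttentionHead

variable {k d : ℕ} {m : Measure (EuclideanSpace ℝ (Fin d))} [IsProbabilityMeasure m] {R : ℝ}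

lemma hasFDerivAt_attnHead (hm : ∀ᵐ y ∂m, ‖y‖ ≤ R) (β : ℝ) (θ : Param k d)
    (w : EuclideanSpace ℝ (Fin d)) :
    HasFDerivAt (fun w => attnHead β w m θ)
      ((toEuclideanCLM (𝕜 := ℝ) (θ.2.2.2ᵀ * θ.2.2.1)).comp
        ((fderiv ℝ (fun z => gammaAttn z m) (β • toEuclideanLin (θ.2.1ᵀ * θ.1) w)).comp
          (β • toEuclideanCLM (𝕜 := ℝ) (θ.2.1ᵀ * θ.1)))) w :=
  (toEuclideanCLM (𝕜 := ℝ) (θ.2.2.2ᵀ * θ.2.2.1)).hasFDerivAt.comp w <|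
    (differentiable_gammaAttn hm _).hasFDerivAt.comp w (β • toEuclideanCLM (𝕜 := ℝ) _).hasFDerivAt

lemma norm_fderiv_attnHead_le (hm : ∀ᵐ y ∂m, ‖y‖ ≤ R) {R₂ : ℝ} {θ : Param k d}
    (hθ : θ ∈ paramBall k d R₂) (β : ℝ) (w : EuclideanSpace ℝ (Fin d)) :
    ‖fderiv ℝ (fun w => attnHead β w m θ) w‖ ≤ 2 * |β| * R ^ 2 * R₂ ^ 4 := by
  obtain ⟨hQ, hK, hV, hO⟩ := hθ
  rw [(hasFDerivAt_attnHead hm β θ w).fderiv]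
  refine (ContinuousLinearMap.opNorm_comp_le _ _).trans <|
    (mul_le_mul_of_nonneg_left (ContinuousLinearMap.opNorm_comp_le _ _) (norm_nonneg _)).trans ?_
  rw [norm_smul, Real.norm_eq_abs]
  calc _ ≤ R₂ ^ 2 * (2 * R ^ 2 * (|β| * R₂ ^ 2)) := by
        gcongr
        · exact norm_toEuclideanCLM_transpose_mul_le hO hV
        · exact norm_fderiv_gammaAttn_le hm _
        · exact norm_toEuclideanCLM_transpose_mul_le hK hQ
    _ = _ := by ring

lemma norm_attnHead_le (hm : ∀ᵐ y ∂m, ‖y‖ ≤ R) {R₂ : ℝ} {θ : Param k d}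
    (hθ : θ ∈ paramBall k d R₂) (β : ℝ) (w : EuclideanSpace ℝ (Fin d)) :
    ‖attnHead β w m θ‖ ≤ R₂ ^ 2 * R :=
  ((toEuclideanCLM (𝕜 := ℝ) (θ.2.2.2ᵀ * θ.2.2.1)).le_opNorm _).trans <|
    mul_le_mul (norm_toEuclideanCLM_transpose_mul_le hθ.2.2.2 hθ.2.2.1)
      (norm_gammaAttn_le hm _) (norm_nonneg _) (sq_nonneg R₂)

lemma continuous_attnHead (hm : ∀ᵐ y ∂m, ‖y‖ ≤ R) (β : ℝ) :
    Continuous fun x : Param k d × EuclideanSpace ℝ (Fin d) => attnHead β x.2 m x.1 := by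
  have hγ := (differentiable_gammaAttn hm).continuous
  have hθ : Continuous fun x : Param k d × EuclideanSpace ℝ (Fin d) => x.1 := continuous_fst
  exact (hθ.snd.snd.snd.matrix_transpose.matrix_mul hθ.snd.snd.fst).toEuclideanLin_apply
    (hγ.comp' (((hθ.snd.fst.matrix_transpose.matrix_mul hθ.fst).toEuclideanLin_apply
      continuous_snd).const_smul β))

end AttentionHead

section AttentionField

variable {k d : ℕ} {m : Measure (EuclideanSpace ℝ (Fin d))} [IsProbabilityMeasure m] {R R₂ : ℝ}
  {ν : Measure (Param k d)}

theorem hasFDerivAt_attnGamma [IsFiniteMeasure ν] (hm : ∀ᵐ y ∂m, ‖y‖ ≤ R)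
    (hν : ∀ᵐ θ ∂ν, θ ∈ paramBall k d R₂) (β : ℝ) (x : EuclideanSpace ℝ (Fin d)) :
    HasFDerivAt (fun w => attnGamma β w m ν)
      (∫ θ, fderiv ℝ (fun w => attnHead β w m θ) x ∂ν) x := by
  have hmeas (w : EuclideanSpace ℝ (Fin d)) :
      AEStronglyMeasurable (fun θ => attnHead β w m θ) ν :=
    ((continuous_attnHead hm β).comp' (continuous_id.prodMk continuous_const)).aestronglyMeasurable
  refine hasFDerivAt_integral_of_dominated_of_fderiv_le Filter.univ_mem
    (.of_forall hmeas)
    (.of_bound (hmeas x) (R₂ ^ 2 * R)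
      (by filter_upwards [hν] with θ hθ using norm_attnHead_le hm hθ β x))
    ?_
    (by filter_upwards [hν] with θ hθ w _ using norm_fderiv_attnHead_le hm hθ β w)
    (integrable_const _)
    (.of_forall fun θ w _ => (hasFDerivAt_attnHead hm β θ w).differentiableAt.hasFDerivAt)
  exact ((measurable_fderiv_with_param ℝ (f := fun θ w => attnHead β w m θ)
    (continuous_attnHead hm β)).comp measurable_prodMk_right).aestronglyMeasurable

theorem norm_fderiv_attnGamma_le [IsProbabilityMeasure ν] (hm : ∀ᵐ y ∂m, ‖y‖ ≤ R)
    (hν : ∀ᵐ θ ∂ν, θ ∈ paramBall k d R₂) (β : ℝ) (x : EuclideanSpace ℝ (Fin d)) :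
    ‖fderiv ℝ (fun w => attnGamma β w m ν) x‖ ≤ 2 * |β| * R ^ 2 * R₂ ^ 4 := by
  rw [(hasFDerivAt_attnGamma hm hν β x).fderiv]
  simpa using norm_integral_le_of_norm_le_const
    (hν.mono fun θ hθ => norm_fderiv_attnHead_le hm hθ β x)

end AttentionField

theorem stmt_13_general {k d : ℕ} (R₁ R₂ R₃ β : ℝ)
    (hβ : 0 < β)
    (m : Measure (EuclideanSpace ℝ (Fin d))) [IsProbabilityMeasure m]
    (ν : Measure (Param k d)) [IsProbabilityMeasure ν]
    (hm : m (Metric.closedBall 0 R₁) = 1)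
    (hν : ν (paramBall k d R₂) = 1)
    (a : EuclideanSpace ℝ (Fin d)) (ha : a ∈ Metric.closedBall (0 : EuclideanSpace ℝ (Fin d)) R₃)
    (x : EuclideanSpace ℝ (Fin d)) :
    DifferentiableAt ℝ (fun w => ⟪a, attnGamma β w m ν⟫) x ∧
      ‖gradient (fun w => ⟪a, attnGamma β w m ν⟫) x‖ ≤ 2 * β * R₁ ^ 2 * R₂ ^ 4 * R₃ := by
  have hm' : ∀ᵐ y ∂m, ‖y‖ ≤ R₁ := (ae_mem_of_measure_eq_one measurableSet_closedBall hm).mono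
    fun y hy => mem_closedBall_zero_iff.1 hy
  have hν' := ae_mem_of_measure_eq_one (isClosed_paramBall k d R₂).measurableSet hν
  have ha' : ‖innerSL ℝ a‖ ≤ R₃ := by rwa [innerSL_apply_norm, ← mem_closedBall_zero_iff]
  have hH : HasFDerivAt (fun w => ⟪a, attnGamma β w m ν⟫)
      ((innerSL ℝ a).comp (fderiv ℝ (fun w => attnGamma β w m ν) x)) x :=
    (innerSL ℝ a).hasFDerivAt.comp x
      (hasFDerivAt_attnGamma hm' hν' β x).differentiableAt.hasFDerivAt
  refine ⟨hH.differentiableAt, ?_⟩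
  rw [← (InnerProductSpace.toDual ℝ _).norm_map, toDual_gradient, hH.fderiv]
  calc _ ≤ ‖innerSL ℝ a‖ * ‖fderiv ℝ (fun w => attnGamma β w m ν) x‖ :=
        ContinuousLinearMap.opNorm_comp_le _ _
    _ ≤ R₃ * (2 * |β| * R₁ ^ 2 * R₂ ^ 4) :=
        mul_le_mul ha' (norm_fderiv_attnGamma_le hm' hν' β x) (norm_nonneg _)
          ((norm_nonneg _).trans ha')
    _ = _ := by rw [abs_of_pos hβ]; ring

/-- Boundedness of the gradient of the Hamiltonian `x ↦ ⟨a, Γ(x, m, ν)⟩`: the map is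
differentiable on `ℝ^d` with `‖∇_x⟨a, Γ(x, m, ν)⟩‖ ≤ 2βR₁²R₂⁴R₃`. -/
theorem stmt_13 {k d : ℕ} (R₁ R₂ R₃ β : ℝ)
    (hR₁ : 0 < R₁) (hR₂ : 0 < R₂) (hR₃ : 0 < R₃) (hβ : 0 < β)
    (m : Measure (EuclideanSpace ℝ (Fin d))) [IsProbabilityMeasure m]
    (ν : Measure (Param k d)) [IsProbabilityMeasure ν]
    (hm : m (Metric.closedBall 0 R₁) = 1)
    (hν : ν (paramBall k d R₂) = 1)
    (a : EuclideanSpace ℝ (Fin d)) (ha : a ∈ Metric.closedBall (0 : EuclideanSpace ℝ (Fin d)) R₃)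
    (x : EuclideanSpace ℝ (Fin d)) :
    DifferentiableAt ℝ (fun w => ⟪a, attnGamma β w m ν⟫) x ∧
      ‖gradient (fun w => ⟪a, attnGamma β w m ν⟫) x‖ ≤ 2 * β * R₁ ^ 2 * R₂ ^ 4 * R₃ :=
  stmt_13_general R₁ R₂ R₃ β hβ m ν hm hν a ha x
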